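/- arXiv:2311.17022 — 2 statements merged into one kernel-verified Lean document; each statement's English description precedes it below -/
import Mathlib

section
/- Let N, q ≥ 1 and consider the lattice L_q ⊆ ℤ^{2N} generated by the rows of M_q = [[I_N, -q·I_N], [0_N, q·I_N]]. Denote the rows by v_1, ..., v_{2N} and set v_0 = -(v_1 + ... + v_{2N}). Then v_i · v_j ≤ 0 for all 0 ≤ i < j ≤ 2N, i.e., the vectors v_0, v_1, ..., v_{2N} form an obtuse superbasis of L_q. -/
open Finset

/-- For the lattice generated by the rows `v_i = e_i - q e_{N+i}`,
`v_{N+i} = q e_{N+i}` of `M_q = [[I_N, -q I_N],[0, q I_N]]`, together with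
`v_0 = -(v_1 + ⋯ + v_{2N})`, all pairwise dot products are nonpositive and the
`2N+1` vectors sum to zero: they form an obtuse superbasis. -/
theorem stmt5 (N q : ℕ) (hN : 0 < N) (hq : 0 < q) :
    ∀ row : Fin N ⊕ Fin N → Fin N ⊕ Fin N → ℤ,
      row = Sum.elim
          (fun i => Sum.elim (fun l => if l = i then (1 : ℤ) else 0)
            (fun l => if l = i then -(q : ℤ) else 0))
          (fun i => Sum.elim (fun _ => (0 : ℤ))
            (fun l => if l = i then (q : ℤ) else 0)) →
      ∀ V : Option (Fin N ⊕ Fin N) → Fin N ⊕ Fin N → ℤ,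
        V = (fun o => o.elim (-(∑ r : Fin N ⊕ Fin N, row r)) row) →
        (∑ o : Option (Fin N ⊕ Fin N), V o) = 0 ∧
        ∀ i j : Option (Fin N ⊕ Fin N), i ≠ j →
          (∑ l : Fin N ⊕ Fin N, V i l * V j l) ≤ 0 := by
  intro row hrow V hV
  have hsum : (∑ r : Fin N ⊕ Fin N, row r) = Sum.elim (fun _ => (1:ℤ)) (fun _ => 0) := by
    funext l
    subst hrow
    rw [Finset.sum_apply]
    rcases l with l | l <;>
      simp [Fintype.sum_sum_type, Finset.sum_ite_eq, Finset.sum_ite_eq']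
  constructor
  · subst hV
    rw [Fintype.sum_option]
    simp
  · intro i j hij
    subst hV
    simp only [Option.elim]
    rcases i with _ | (a | a) <;> rcases j with _ | (b | b) <;>
        simp_all [hsum, Fintype.sum_sum_type, mul_ite, ite_mul,
          Finset.sum_ite_eq, Finset.sum_ite_eq'] <;>
      (clear hsum hrow; split <;> simp_all <;> positivity)
end

section
/- Let k ≥ 1, q ≥ 1 be integers with 1 + k² ≤ 2q, and let P = ⌊kq/(k² + 1)⌋. Define vectors in ℤ^{2N}: v_i = e_i - k·e_{N+i} and v_{N+i} = P·e_i + (q - Pk)·e_{N+i} for 1 ≤ i ≤ N, and v_0 = -Σ_{j=1}^{2N} v_j. Then v_i · v_j ≤ 0 for all 0 ≤ i < j ≤ 2N; hence the lattice L_k generated by {v_1,...,v_{2N}} is of Voronoi First Kind. -/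
open Finset

/-- For `1 + k² ≤ 2q` and `P = ⌊kq/(k²+1)⌋`, the vectors
`v_i = e_i - k e_{N+i}`, `v_{N+i} = P e_i + (q - Pk) e_{N+i}` and
`v_0 = -∑ v_j` have pairwise nonpositive dot products (and sum to zero),
hence `L_k` is of Voronoi First Kind. -/
theorem stmt6 (N k q : ℕ) (hN : 0 < N) (hk : 0 < k) (hq : 0 < q)
    (hkq : 1 + k ^ 2 ≤ 2 * q) (P : ℤ) (hP : P = ((k : ℤ) * q) / ((k : ℤ) ^ 2 + 1)) :
    ∀ row : Fin N ⊕ Fin N → Fin N ⊕ Fin N → ℤ,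
      row = Sum.elim
          (fun i => Sum.elim (fun l => if l = i then (1 : ℤ) else 0)
            (fun l => if l = i then -(k : ℤ) else 0))
          (fun i => Sum.elim (fun l => if l = i then P else 0)
            (fun l => if l = i then (q : ℤ) - P * k else 0)) →
      ∀ V : Option (Fin N ⊕ Fin N) → Fin N ⊕ Fin N → ℤ,
        V = (fun o => o.elim (-(∑ r : Fin N ⊕ Fin N, row r)) row) →
        (∑ o : Option (Fin N ⊕ Fin N), V o) = 0 ∧
        ∀ i j : Option (Fin N ⊕ Fin N), i ≠ j →
          (∑ l : Fin N ⊕ Fin N, V i l * V j l) ≤ 0 := by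
  intro row hrow V hV
  subst hrow hV
  -- arithmetic facts about P
  have hk1 : (0:ℤ) < (k:ℤ)^2 + 1 := by positivity
  set r : ℤ := ((k:ℤ) * q) % ((k:ℤ)^2 + 1) with hrdef
  have hE : (k:ℤ) * q = ((k:ℤ)^2 + 1) * P + r := by
    rw [hP, hrdef]; exact (Int.mul_ediv_add_emod _ _).symm
  have hr0 : 0 ≤ r := Int.emod_nonneg _ (by positivity)
  have hr1 : r < (k:ℤ)^2 + 1 := Int.emod_lt_of_pos _ hk1
  have hkq' : (1:ℤ) + (k:ℤ)^2 ≤ 2 * q := by exact_mod_cast hkq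
  have hP0 : 0 ≤ P := by
    rw [hP]; exact Int.ediv_nonneg (by positivity) (by positivity)
  have key1 : P + -((k:ℤ) * ((q:ℤ) - P * k)) ≤ 0 := by nlinarith [hE, hr0]
  have key3 : (-P + -1) * P + (P * (k:ℤ) - (q:ℤ) + k) * ((q:ℤ) - P * (k:ℤ)) ≤ 0 := by
    nlinarith [hE, hr0, hr1, hkq', sq_nonneg ((q:ℤ) - r),
      mul_nonneg hr0 (by linarith : (0:ℤ) ≤ 2 * q - ((k:ℤ)^2 + 1))]
  constructor
  · simp [Fintype.sum_option]
  · rintro (_|⟨a|a⟩) (_|⟨b|b⟩) hij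
    case _ => exact absurd rfl hij
    all_goals simp [Option.elim, Sum.elim_inl, Sum.elim_inr, Fintype.sum_sum_type,
      Pi.neg_apply, Pi.add_apply, Finset.sum_apply, mul_ite, ite_mul,
      Finset.sum_ite_eq, Finset.sum_ite_eq', apply_ite (fun z : ℤ => -z)]
    -- none, some (inl b)
    case _ => nlinarith [hE, hr1]
    -- none, some (inr b)
    case _ => linarith [key3]
    -- some (inl a), none
    case _ => nlinarith [hE, hr1]
    -- some (inl a), some (inl b)
    case _ =>
      simp only [ne_eq, Option.some.injEq, Sum.inl.injEq] at hij
      simp [Ne.symm hij]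
    -- some (inl a), some (inr b)
    case _ =>
      rcases eq_or_ne b a with h|h
      · simpa [h] using key1
      · simp [h]
    -- some (inr a), none
    case _ => nlinarith [key3]
    -- some (inr a), some (inl b)
    case _ =>
      rcases eq_or_ne b a with h|h
      · simp only [h, if_true]; nlinarith [key1]
      · simp [h]
    -- some (inr a), some (inr b)
    case _ =>
      simp only [ne_eq, Option.some.injEq, Sum.inr.injEq] at hij
      simp [Ne.symm hij]
end
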